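/- arXiv:1409.5660 — 6 statements merged into one kernel-verified Lean document; each statement's English description precedes it below -/
import Mathlib

section
/- With ψ_l as defined, for every F_q-linear combination f of the variables x_1,...,x_n, ψ_l(f) = (ψ_{l-1}(f))^q - ψ_{l-1}(x_l)^{q-1} · ψ_{l-1}(f). -/
open MvPolynomial Finset

/-- The `F`-algebra endomorphism `ψ_l` of `F[x_1,…,x_n]` sending each variable `x_i` to
`F_{l,q}(x_i) = ∏_{u ∈ span(x_1,…,x_l)} (x_i - u)`. -/
noncomputable def psi (F : Type*) [Field F] [Fintype F] (n l : ℕ) (h : l ≤ n) :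
    MvPolynomial (Fin n) F →ₐ[F] MvPolynomial (Fin n) F :=
  MvPolynomial.aeval fun i =>
    ∏ c : Fin l → F, (MvPolynomial.X i - ∑ j, c j • MvPolynomial.X (Fin.castLE h j))

/-!
For vectors `v = (v_1, …, v_l)` of a commutative `F`-algebra, `P_v(g) = ∏_{u ∈ span v} (g - u)`
satisfies `P_{v, w}(g) = ∏_{t ∈ F} P_v(g - t w)`. Homogenizing `∏_{t ∈ F} (X - t) = X^q - X` gives
`∏_{t ∈ F} (y - t z) = y^q - z^{q-1} y`, so once `P_v` is `F`-linear,
`P_{v, w}(g) = P_v(g)^q - P_v(w)^{q-1} P_v(g)`; this is again `F`-linear in `g` because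
Frobenius is, which closes the induction. Finally `ψ_l` and `P_{x_1, …, x_l}` are both linear and
agree on the variables, hence on all linear forms.
-/

namespace FiniteField

variable {F : Type*} [Field F] [Fintype F]

theorem prod_univ_X_sub_C :
    ∏ t : F, (Polynomial.X - Polynomial.C t) = Polynomial.X ^ Fintype.card F - Polynomial.X := by
  have hmonic : (Polynomial.X ^ Fintype.card F - Polynomial.X : Polynomial F).Monic :=
    Polynomial.monic_X_pow_sub (by simpa using Fintype.one_lt_card)
  have hcard : Multiset.card (Polynomial.X ^ Fintype.card F - Polynomial.X : Polynomial F).roots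
      = (Polynomial.X ^ Fintype.card F - Polynomial.X : Polynomial F).natDegree := by
    rw [roots_X_pow_card_sub_X, X_pow_card_sub_X_natDegree_eq F Fintype.one_lt_card]
    rfl
  rw [← Polynomial.prod_multiset_X_sub_C_of_monic_of_roots_card_eq hmonic hcard,
    roots_X_pow_card_sub_X]
  rfl

theorem prod_univ_X_zero_sub_smul_X_one :
    ∏ t : F, (X 0 - t • X 1 : MvPolynomial (Fin 2) F)
      = X 0 ^ Fintype.card F - X 1 ^ (Fintype.card F - 1) * X 0 := by
  have hq : 1 < Fintype.card F := Fintype.one_lt_card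
  have hprod := Polynomial.homogenize_finsetProd (s := univ)
    (p := fun t : F => Polynomial.X - Polynomial.C t) (n := fun _ => 1)
    (fun _ _ => by compute_degree!)
  rw [prod_univ_X_sub_C] at hprod
  simp only [sum_const, card_univ, smul_eq_mul, mul_one, Polynomial.homogenize_sub,
    Polynomial.homogenize_X one_ne_zero, Polynomial.homogenize_C,
    Polynomial.homogenize_X_pow le_rfl] at hprod
  simpa [mul_comm, Algebra.smul_def, hq.ne'] using hprod.symm

theorem prod_univ_sub_smul {A : Type*} [CommRing A] [Algebra F A] (y z : A) :
    ∏ t : F, (y - t • z) = y ^ Fintype.card F - z ^ (Fintype.card F - 1) * y := by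
  simpa using congrArg (aeval ![y, z]) (prod_univ_X_zero_sub_smul_X_one (F := F))

end FiniteField

section SpanProd

variable {F : Type*} [Field F] [Fintype F] {A : Type*} [CommRing A] [Algebra F A]

variable (F) in
def spanProd {l : ℕ} (v : Fin l → A) (g : A) : A :=
  ∏ c : Fin l → F, (g - ∑ j, c j • v j)

theorem spanProd_zero (v : Fin 0 → A) (g : A) : spanProd F v g = g := by
  simp [spanProd]

theorem spanProd_succ {l : ℕ} (v : Fin (l + 1) → A) (g : A) :
    spanProd F v g = ∏ t : F, spanProd F (Fin.init v) (g - t • v (Fin.last l)) := by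
  rw [spanProd, ← (Fin.snocEquiv fun _ => F).prod_comp (fun c => g - ∑ j, c j • v j),
    Fintype.prod_prod_type]
  refine Fintype.prod_congr _ _ fun t => Fintype.prod_congr _ _ fun c => ?_
  simp only [Fin.snocEquiv, Equiv.coe_fn_mk, Fin.sum_univ_castSucc, Fin.snoc_castSucc,
    Fin.snoc_last, Fin.init]
  ring

theorem spanProd_succ_of_isLinearMap {l : ℕ} (v : Fin (l + 1) → A)
    (hlin : IsLinearMap F (spanProd F (Fin.init v))) (g : A) :
    spanProd F v g = spanProd F (Fin.init v) g ^ Fintype.card F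
      - spanProd F (Fin.init v) (v (Fin.last l)) ^ (Fintype.card F - 1)
        * spanProd F (Fin.init v) g := by
  simp_rw [spanProd_succ, hlin.map_sub, hlin.map_smul]
  exact FiniteField.prod_univ_sub_smul _ _

theorem isLinearMap_spanProd : ∀ {l : ℕ} (v : Fin l → A), IsLinearMap F (spanProd F v)
  | 0, v => by
    convert (LinearMap.id : A →ₗ[F] A).isLinear
    ext g
    exact spanProd_zero v g
  | l + 1, v => by
    have hlin := isLinearMap_spanProd (Fin.init v)
    let z := spanProd F (Fin.init v) (v (Fin.last l))
    have key : spanProd F v = ((FiniteField.frobeniusAlgHom F A).toLinearMap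
        - LinearMap.mulLeft F (z ^ (Fintype.card F - 1))).comp (IsLinearMap.mk' _ hlin) := by
      ext g
      simp [spanProd_succ_of_isLinearMap v hlin, z]
    rw [key]
    exact LinearMap.isLinear _

end SpanProd

section Psi

variable {F : Type*} [Field F] [Fintype F] {n : ℕ}

theorem psi_X (l : ℕ) (h : l ≤ n) (i : Fin n) :
    psi F n l h (X i) = spanProd F (fun j => X (Fin.castLE h j)) (X i) := by
  rw [psi, aeval_X]
  rfl

theorem psi_sum_smul_X (l : ℕ) (h : l ≤ n) (a : Fin n → F) :
    psi F n l h (∑ i, a i • X i)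
      = spanProd F (fun j => X (Fin.castLE h j)) (∑ i, a i • X i) := by
  have hlin := isLinearMap_spanProd (F := F) fun j => (X (Fin.castLE h j) : MvPolynomial (Fin n) F)
  rw [← IsLinearMap.mk'_apply hlin, map_sum, map_sum]
  simp only [map_smul, psi_X, IsLinearMap.mk'_apply]

end Psi

theorem stmt_3 (F : Type*) [Field F] [Fintype F] (n l q : ℕ) (hq : q = Fintype.card F)
    (h : l + 1 ≤ n) (a : Fin n → F) :
    psi F n (l + 1) h (∑ i, a i • X i)
      = (psi F n l (by omega) (∑ i, a i • X i)) ^ q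
        - (psi F n l (by omega) (X ⟨l, by omega⟩)) ^ (q - 1)
          * psi F n l (by omega) (∑ i, a i • X i) := by
  subst hq
  rw [psi_sum_smul_X, psi_sum_smul_X, psi_X]
  exact spanProd_succ_of_isLinearMap _ (isLinearMap_spanProd _) _
end

section
/- For each l with 1 ≤ l ≤ n-1, the polynomial ψ_l(x_{l+1}) = F_{l,q}(x_{l+1}) = ∏_{u ∈ span(x_1,...,x_l)}(x_{l+1} - u) is invariant under the action of the lower unitriangular group U(n,F_q) on F_q[x_1,...,x_n], and it equals the orbit product of x_{l+1} under this group. -/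
open MvPolynomial Finset

theorem stmt_5 (F : Type*) [Field F] [Fintype F] (n l : ℕ) (h : l + 1 ≤ n) :
    (∀ g : Matrix (Fin n) (Fin n) F, (∀ i j : Fin n, i < j → g i j = 0) → (∀ i, g i i = 1) →
        MvPolynomial.aeval (R := F) (fun i => ∑ j, g i j • MvPolynomial.X j)
            (psi F n l (by omega) (X ⟨l, by omega⟩))
          = psi F n l (by omega) (X ⟨l, by omega⟩))
    ∧ psi F n l (by omega) (X ⟨l, by omega⟩)
        = ∏ c : Fin l → F,
            (X (⟨l, by omega⟩ : Fin n) + ∑ j, c j • X (Fin.castLE (by omega) j)) := by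
  have hl : l < n := h
  set L : (Fin l → F) → MvPolynomial (Fin n) F :=
    fun c => ∑ j, c j • X (Fin.castLE hl.le j) with hL
  have hLsub : ∀ a b : Fin l → F, L (a - b) = L a - L b := by
    intro a b
    simp [hL, sub_smul, Finset.sum_sub_distrib]
  constructor
  · intro g hlow hdiag
    rw [psi, aeval_X, map_prod]
    -- key expansion of the rows of g
    have key : ∀ i : Fin n, (i : ℕ) ≤ l →
        ∑ j : Fin n, g i j • (X j : MvPolynomial (Fin n) F)
          = (if (i : ℕ) = l then X (⟨l, hl⟩ : Fin n) else 0)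
            + ∑ j : Fin l, g i (Fin.castLE hl.le j) • X (Fin.castLE hl.le j) := by
      intro i hi
      have hsubset : (Finset.univ.image (Fin.castLE hl.le)) ∪ {(⟨l, hl⟩ : Fin n)} ⊆
          (Finset.univ : Finset (Fin n)) := Finset.subset_univ _
      rw [← Finset.sum_subset hsubset]
      · have hnotmem : (⟨l, hl⟩ : Fin n) ∉ Finset.univ.image (Fin.castLE hl.le) := by
          simp only [Finset.mem_image, Finset.mem_univ, true_and]
          rintro ⟨j, hj⟩
          have := j.isLt
          have := congrArg Fin.val hj
          simp at this
          omega
        rw [Finset.sum_union (by simpa using hnotmem), Finset.sum_image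
          (fun a _ b _ hab => Fin.castLE_injective _ hab), Finset.sum_singleton]
        rcases eq_or_lt_of_le hi with heq | hlt
        · have hieq : i = (⟨l, hl⟩ : Fin n) := Fin.ext heq
          subst hieq
          rw [hdiag, if_pos rfl, one_smul, add_comm]
        · rw [if_neg (by omega), hlow i ⟨l, hl⟩ (by exact hlt), zero_smul, add_zero, zero_add]
      · intro j _ hj
        simp only [Finset.mem_union, Finset.mem_image, Finset.mem_univ, true_and,
          Finset.mem_singleton, not_or] at hj
        obtain ⟨h1, h2⟩ := hj
        push_neg at h1
        have hjl : l < (j : ℕ) := by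
          rcases lt_trichotomy (j : ℕ) l with hlt | heq | hgt
          · exact absurd (Fin.ext rfl : Fin.castLE hl.le ⟨(j : ℕ), hlt⟩ = j) (h1 _)
          · exact absurd (Fin.ext heq : j = ⟨l, hl⟩) h2
          · exact hgt
        rw [hlow i j (by rw [Fin.lt_def]; omega), zero_smul]
    -- the l × l matrix M
    set M : Matrix (Fin l) (Fin l) F :=
      fun j k => g (Fin.castLE hl.le j) (Fin.castLE hl.le k) with hM
    have hMtri : M.BlockTriangular OrderDual.toDual := by
      intro j k hjk
      exact hlow _ _ (by simpa using hjk)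
    have hMdet : IsUnit M.det := by
      rw [Matrix.det_of_lowerTriangular M hMtri]
      simp [hM, hdiag]
    set b : Fin l → F := fun j => g ⟨l, hl⟩ (Fin.castLE hl.le j) with hb
    -- each factor transforms as
    have factor : ∀ c : Fin l → F,
        (aeval (R := F) fun i => ∑ j, g i j • (X j : MvPolynomial (Fin n) F))
          (X (⟨l, hl⟩ : Fin n) - L c)
          = X (⟨l, hl⟩ : Fin n) - L (Matrix.vecMul c M - b) := by
      intro c
      have hσL : (aeval (R := F) fun i => ∑ j, g i j • (X j : MvPolynomial (Fin n) F)) (L c)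
          = L (Matrix.vecMul c M) := by
        have hterm : ∀ j : Fin l,
            c j • ∑ k : Fin n, g (Fin.castLE hl.le j) k • (X k : MvPolynomial (Fin n) F)
              = ∑ k : Fin l, (c j * M j k) • X (Fin.castLE hl.le k) := by
          intro j
          rw [key (Fin.castLE hl.le j) (le_of_lt j.isLt), if_neg (by simpa using j.isLt.ne),
            zero_add, Finset.smul_sum]
          simp [mul_smul, hM]
        simp only [hL, map_sum, map_smul, aeval_X]
        rw [Finset.sum_congr rfl fun j _ => hterm j, Finset.sum_comm]
        refine Finset.sum_congr rfl fun k _ => ?_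
        simp [Matrix.vecMul, dotProduct, Finset.sum_smul]
      rw [map_sub, aeval_X, key ⟨l, hl⟩ le_rfl, if_pos rfl, hσL, hLsub]
      have hLb : ∑ j : Fin l, g ⟨l, hl⟩ (Fin.castLE hl.le j) • (X (Fin.castLE hl.le j) :
          MvPolynomial (Fin n) F) = L b := rfl
      rw [hLb]
      abel
    rw [Finset.prod_congr rfl fun c _ => factor c]
    -- reindex via the affine bijection c ↦ vecMul c M - b
    have reindex := Equiv.prod_comp
      (⟨fun c => Matrix.vecMul c M - b, fun d => Matrix.vecMul (d + b) M⁻¹,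
        fun c => by simp [Matrix.vecMul_vecMul, Matrix.mul_nonsing_inv M hMdet],
        fun d => by simp [Matrix.vecMul_vecMul, Matrix.nonsing_inv_mul M hMdet]⟩ :
        (Fin l → F) ≃ (Fin l → F))
      (fun c => X (⟨l, hl⟩ : Fin n) - L c)
    simp only [Equiv.coe_fn_mk] at reindex
    exact reindex
  · rw [psi, aeval_X]
    refine Fintype.prod_equiv (Equiv.neg _) _ _ fun c => ?_
    simp [sub_eq_add_neg, ← Finset.sum_neg_distrib]
end

section
/- Let q be even, S an n×n matrix and B a 2×n matrix over F_q with S + S^T = B^T J_2 B where J_2 = [[0,1],[1,0]]. Write S = S' + C with S' symmetric and C strictly upper triangular (as in the unique decomposition in characteristic 2). Let X = (α_1,...,α_n), Y = (y_1,y_2) be row vectors over F_q and set Z = Y + X B^T with Z = (z_1,z_2). Then z_1 z_2 = y_1 y_2 + X B^T J_2 Y^T + X C X^T + Σ_{i=1}^n b_{1i} b_{2i} α_i^2. -/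
/-!
Write `u, v` for the two entries of `X Bᵀ`. Expanding `(y₁ + u)(y₂ + v)` leaves only `uv` to be
identified. The hypothesis on `S` says exactly that `S + Sᵀ = P + Pᵀ` for the rank-one matrix
`P i j = b₁ᵢ b₂ⱼ`, so `C` is the strictly upper triangular part of `P + Pᵀ`; splitting the
quadratic form `X P Xᵀ = uv` into its off-diagonal and diagonal parts gives
`X C Xᵀ + ∑ᵢ b₁ᵢ b₂ᵢ αᵢ²`.
-/

open Finset Matrix

section

variable {α : Type*} [Fintype α] [LinearOrder α] [LocallyFiniteOrderTop α]
  [LocallyFiniteOrderBot α]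

theorem Finset.sum_sum_eq_sum_sum_Ioi_add_sum_diag {M : Type*} [AddCommMonoid M]
    (f : α → α → M) :
    ∑ i, ∑ j, f i j = ∑ i, ∑ j ∈ Ioi i, (f j i + f i j) + ∑ i, f i i := by
  rw [sum_sum_Ioi_add_eq_sum_sum_off_diag, ← sum_add_distrib, sum_comm]
  exact sum_congr rfl fun i _ => Fintype.sum_eq_sum_compl_add i _

theorem sum_sum_mul_mul_eq_of_eq_ite_lt {R : Type*} [CommSemiring R] {M C : Matrix α α R}
    (hC : ∀ i j, C i j = if i < j then M i j + M j i else 0) (x : α → R) :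
    ∑ i, ∑ j, x i * C i j * x j + ∑ i, M i i * x i ^ 2 = ∑ i, ∑ j, x i * M i j * x j := by
  rw [sum_sum_eq_sum_sum_Ioi_add_sum_diag (fun i j => x i * M i j * x j)]
  congr 1
  · refine sum_congr rfl fun i _ => ?_
    simp only [hC, mul_ite, ite_mul, mul_zero, zero_mul, sum_ite, sum_const_zero, add_zero]
    exact sum_congr (by ext; simp) fun j _ => by ring
  · exact sum_congr rfl fun i _ => by ring

end

theorem Matrix.transpose_mul_antidiag_mul_apply {R n : Type*} [CommSemiring R] [Fintype n]
    (B : Matrix (Fin 2) n R) (i j : n) :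
    (Bᵀ * !![(0 : R), 1; 1, 0] * B) i j = B 0 i * B 1 j + B 0 j * B 1 i := by
  simp only [mul_apply, transpose_apply, of_apply, cons_val', cons_val_fin_one, Fin.sum_univ_two,
    cons_val_zero, cons_val_one, mul_zero, mul_one, zero_add, add_zero]
  ring

theorem stmt_9_general (F : Type*) [Field F] (n : ℕ)
    (S : Matrix (Fin n) (Fin n) F) (B : Matrix (Fin 2) (Fin n) F)
    (hS : S + S.transpose = B.transpose * !![(0 : F), 1; 1, 0] * B)
    (C : Matrix (Fin n) (Fin n) F)
    (hC : ∀ i j : Fin n, C i j = if i < j then S i j + S j i else 0)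
    (X : Fin n → F) (Y Z : Fin 2 → F)
    (hZ : ∀ k, Z k = Y k + ∑ i, X i * B k i) :
    Z 0 * Z 1
      = Y 0 * Y 1
        + (∑ k : Fin 2, ∑ l : Fin 2, (∑ i, X i * B k i) * !![(0 : F), 1; 1, 0] k l * Y l)
        + (∑ i, ∑ j, X i * C i j * X j)
        + ∑ i, B 0 i * B 1 i * X i ^ 2 := by
  let P : Matrix (Fin n) (Fin n) F := of fun i j => B 0 i * B 1 j
  have hCP : ∀ i j, C i j = if i < j then P i j + P j i else 0 := fun i j => by
    have hSij : S i j + S j i = B 0 i * B 1 j + B 0 j * B 1 i := by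
      simpa [transpose_mul_antidiag_mul_apply] using congrFun₂ hS i j
    rw [hC, hSij]
    rfl
  have hXBX : (∑ i, X i * B 0 i) * (∑ i, X i * B 1 i)
      = ∑ i, ∑ j, X i * C i j * X j + ∑ i, B 0 i * B 1 i * X i ^ 2 := by
    have hquad := sum_sum_mul_mul_eq_of_eq_ite_lt hCP X
    simp only [P, of_apply] at hquad
    rw [hquad, sum_mul_sum]
    exact sum_congr rfl fun i _ => sum_congr rfl fun j _ => by ring
  simp only [hZ, Fin.sum_univ_two, of_apply, cons_val', cons_val_zero, cons_val_one,
    empty_val', cons_val_fin_one]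
  linear_combination hXBX

theorem stmt_9 (F : Type*) [Field F] [Fintype F] (hq : Even (Fintype.card F)) (n : ℕ)
    (S : Matrix (Fin n) (Fin n) F) (B : Matrix (Fin 2) (Fin n) F)
    (hS : S + S.transpose = B.transpose * !![(0 : F), 1; 1, 0] * B)
    (C : Matrix (Fin n) (Fin n) F)
    (hC : ∀ i j : Fin n, C i j = if i < j then S i j + S j i else 0)
    (X : Fin n → F) (Y Z : Fin 2 → F)
    (hZ : ∀ k, Z k = Y k + ∑ i, X i * B k i) :
    Z 0 * Z 1
      = Y 0 * Y 1
        + (∑ k : Fin 2, ∑ l : Fin 2, (∑ i, X i * B k i) * !![(0 : F), 1; 1, 0] k l * Y l)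
        + (∑ i, ∑ j, X i * C i j * X j)
        + ∑ i, B 0 i * B 1 i * X i ^ 2 :=
  stmt_9_general F n S B hS C hC X Y Z hZ
end

section
/- With Ω_{s,j} = Σ_{i=1}^m (x_{2m-i+1}^{q^s} x_i + j·x_{2m-i+1} x_i^{q^s}) for s ≥ 1 and j ∈ {-1,1}, the Steenrod operation P^{q^s} satisfies P^{q^s}(Ω_{s,j}) = Ω_{s+1,j} for all s ≥ 1. -/
open MvPolynomial Finset

/-- The `i`-th Steenrod operation `P^i` on `F[x_1,…,x_n]`: the coefficient of `ζ^i` in the image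
of `f` under the `F`-algebra map sending each variable `x_k` to `x_k + x_k^q ζ`. -/
noncomputable def steenrod (F : Type*) [Field F] [Fintype F] (n i : ℕ)
    (f : MvPolynomial (Fin n) F) : MvPolynomial (Fin n) F :=
  ((MvPolynomial.aeval fun k : Fin n =>
      (Polynomial.C (MvPolynomial.X k) +
        Polynomial.X * Polynomial.C (MvPolynomial.X k ^ Fintype.card F) :
        Polynomial (MvPolynomial (Fin n) F))) f).coeff i

/-- `Ω_{0,1} = Σ_{i=1}^m x_{2m-i+1} x_i`. -/
noncomputable def Omega0 (F : Type*) [Field F] [Fintype F] (m : ℕ) :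
    MvPolynomial (Fin (2 * m)) F :=
  ∑ i : Fin m,
    MvPolynomial.X (⟨2 * m - 1 - i, by have := i.isLt; omega⟩ : Fin (2 * m)) *
      MvPolynomial.X (⟨i, by have := i.isLt; omega⟩ : Fin (2 * m))

/-- `Ω_{s,j} = Σ_{i=1}^m (x_{2m-i+1}^{q^s} x_i + j · x_{2m-i+1} x_i^{q^s})` for `s ≥ 1`. -/
noncomputable def Omega (F : Type*) [Field F] [Fintype F] (m s : ℕ) (j : F) :
    MvPolynomial (Fin (2 * m)) F :=
  ∑ i : Fin m,
    (MvPolynomial.X (⟨2 * m - 1 - i, by have := i.isLt; omega⟩ : Fin (2 * m)) ^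
        (Fintype.card F ^ s) *
      MvPolynomial.X (⟨i, by have := i.isLt; omega⟩ : Fin (2 * m)) +
     j • (MvPolynomial.X (⟨2 * m - 1 - i, by have := i.isLt; omega⟩ : Fin (2 * m)) *
      MvPolynomial.X (⟨i, by have := i.isLt; omega⟩ : Fin (2 * m)) ^ (Fintype.card F ^ s)))

namespace Polynomial
lemma coeffA {R : Type*} [CommRing R] (A B E D : R) (t : ℕ) (ht : 2 ≤ t) :
    ((C A + X ^ t * C B) * (C E + X * C D)).coeff t = B * E := by
  have e : ((C A + X ^ t * C B) * (C E + X * C D) : R[X]) =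
      C (A * E) + C (A * D) * X + C (B * E) * X ^ t + C (B * D) * X ^ (t + 1) := by
    simp only [C_mul]; ring
  rw [e]
  simp only [coeff_add, coeff_C_mul, coeff_X, coeff_X_pow, coeff_C]
  rw [if_neg (by omega : ¬ 1 = t), if_neg (by omega : ¬ t = t + 1), if_pos trivial,
    if_neg (by omega : ¬ t = 0)]
  ring

lemma coeffB {R : Type*} [CommRing R] (A B E D : R) (t : ℕ) (ht : 2 ≤ t) :
    ((C A + X * C B) * (C E + X ^ t * C D)).coeff t = A * D := by
  have e : ((C A + X * C B) * (C E + X ^ t * C D) : R[X]) =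
      C (A * E) + C (B * E) * X + C (A * D) * X ^ t + C (B * D) * X ^ (t + 1) := by
    simp only [C_mul]; ring
  rw [e]
  simp only [coeff_add, coeff_C_mul, coeff_X, coeff_X_pow, coeff_C]
  rw [if_neg (by omega : ¬ 1 = t), if_neg (by omega : ¬ t = t + 1), if_pos trivial,
    if_neg (by omega : ¬ t = 0)]
  ring

end Polynomial

lemma key (F : Type*) [Field F] [Fintype F] (N : ℕ) (a b : Fin N) (j : F) (s : ℕ)
    (hs : 1 ≤ s) :
    ((MvPolynomial.aeval fun k : Fin N =>
      (Polynomial.C (MvPolynomial.X k) +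
        Polynomial.X * Polynomial.C (MvPolynomial.X k ^ Fintype.card F) :
        Polynomial (MvPolynomial (Fin N) F)))
      (MvPolynomial.X a ^ Fintype.card F ^ s * MvPolynomial.X b + j • (MvPolynomial.X a * MvPolynomial.X b ^ Fintype.card F ^ s) : MvPolynomial (Fin N) F)).coeff
        (Fintype.card F ^ s)
    = MvPolynomial.X a ^ Fintype.card F ^ (s + 1) * MvPolynomial.X b +
        j • (MvPolynomial.X a * MvPolynomial.X b ^ Fintype.card F ^ (s + 1)) := by
  obtain ⟨p, hc⟩ := CharP.exists F
  haveI := hc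
  obtain ⟨n, hp, hcard⟩ := FiniteField.card F p
  haveI := Fact.mk hp
  set q := Fintype.card F with hq
  have hq2 : 2 ≤ q := Fintype.one_lt_card
  have ht2 : 2 ≤ q ^ s := hq2.trans (Nat.le_self_pow (by omega) q)
  have hfrob : ∀ A A' : MvPolynomial (Fin N) F,
      ((Polynomial.C A + Polynomial.X * Polynomial.C A') ^ q ^ s :
        Polynomial (MvPolynomial (Fin N) F))
      = Polynomial.C (A ^ q ^ s) + Polynomial.X ^ q ^ s * Polynomial.C (A' ^ q ^ s) := by
    intro A A'
    have hqp : q ^ s = p ^ (n * s) := by rw [hcard, ← pow_mul]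
    rw [hqp, add_pow_char_pow, mul_pow]; simp only [← Polynomial.C_pow]
  have hmerge : ∀ A : MvPolynomial (Fin N) F, (A ^ q) ^ q ^ s = A ^ q ^ (s + 1) := by
    intro A
    rw [← pow_mul, pow_succ, mul_comm (q ^ s) q]
  simp only [map_add, map_smul, map_mul, map_pow, MvPolynomial.aeval_X,
    Polynomial.coeff_add, Polynomial.coeff_smul]
  simp only [← Polynomial.C_pow]
  rw [hfrob, hfrob, Polynomial.coeffA _ _ _ _ _ ht2, Polynomial.coeffB _ _ _ _ _ ht2,
    hmerge, hmerge]

theorem stmt_12 (F : Type*) [Field F] [Fintype F] (m : ℕ) (j : F) (hj : j = 1 ∨ j = -1)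
    (s : ℕ) (hs : 1 ≤ s) :
    steenrod F (2 * m) (Fintype.card F ^ s) (Omega F m s j) = Omega F m (s + 1) j := by
  unfold steenrod Omega
  rw [map_sum, Polynomial.finset_sum_coeff]
  exact Finset.sum_congr rfl fun i _ => key F (2 * m) _ _ j s hs
end

section
/- With Ω_{s,j} as above, the Steenrod operation P^{q^s + 1} satisfies P^{q^s+1}(Ω_{s,j}) = Ω_{s,j}^q for all s ≥ 1, and P^1(Ω_{s,j}) = Ω_{s-1,j}^q for s ≥ 2, while P^1(Ω_{1,1}) = 2·Ω_{0,1}^q. -/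
open MvPolynomial Finset

/-- Expansion of the Steenrod total map on `X k ^ (q^s) * X l`. -/
lemma steenrod_aux1 (F : Type*) [Field F] [Fintype F] (N : ℕ)
    (hq : ∀ e : ℕ, ∀ x y : Polynomial (MvPolynomial (Fin N) F),
      (x + y) ^ (Fintype.card F ^ e) = x ^ (Fintype.card F ^ e) + y ^ (Fintype.card F ^ e))
    (k l : Fin N) (s : ℕ) :
    (MvPolynomial.aeval fun k : Fin N =>
      (Polynomial.C (MvPolynomial.X k) +
        Polynomial.X * Polynomial.C (MvPolynomial.X k ^ Fintype.card F) :
        Polynomial (MvPolynomial (Fin N) F)))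
      (MvPolynomial.X k ^ (Fintype.card F ^ s) * MvPolynomial.X l : MvPolynomial (Fin N) F)
    = Polynomial.monomial 0 (MvPolynomial.X k ^ Fintype.card F ^ s * MvPolynomial.X l)
    + Polynomial.monomial 1
        (MvPolynomial.X k ^ Fintype.card F ^ s * MvPolynomial.X l ^ Fintype.card F)
    + Polynomial.monomial (Fintype.card F ^ s)
        (MvPolynomial.X k ^ (Fintype.card F ^ s * Fintype.card F) * MvPolynomial.X l)
    + Polynomial.monomial (Fintype.card F ^ s + 1)
        (MvPolynomial.X k ^ (Fintype.card F ^ s * Fintype.card F) *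
          MvPolynomial.X l ^ Fintype.card F) := by
  set q := Fintype.card F
  rw [map_mul, map_pow, aeval_X, aeval_X, hq]
  have h1 : (Polynomial.C (MvPolynomial.X k) : Polynomial (MvPolynomial (Fin N) F)) ^ q ^ s
      = Polynomial.C (MvPolynomial.X k ^ q ^ s) := by rw [← Polynomial.C_pow]
  have h2 : (Polynomial.X * Polynomial.C (MvPolynomial.X k ^ q) :
      Polynomial (MvPolynomial (Fin N) F)) ^ q ^ s
      = Polynomial.X ^ q ^ s * Polynomial.C (MvPolynomial.X k ^ (q ^ s * q)) := by
    rw [mul_pow, ← Polynomial.C_pow, ← pow_mul, mul_comm q]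
  rw [h1, h2]
  simp only [← Polynomial.C_mul_X_pow_eq_monomial, Polynomial.C_mul]
  ring

/-- Expansion of the Steenrod total map on `X k * X l ^ (q^s)`. -/
lemma steenrod_aux2 (F : Type*) [Field F] [Fintype F] (N : ℕ)
    (hq : ∀ e : ℕ, ∀ x y : Polynomial (MvPolynomial (Fin N) F),
      (x + y) ^ (Fintype.card F ^ e) = x ^ (Fintype.card F ^ e) + y ^ (Fintype.card F ^ e))
    (k l : Fin N) (s : ℕ) :
    (MvPolynomial.aeval fun k : Fin N =>
      (Polynomial.C (MvPolynomial.X k) +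
        Polynomial.X * Polynomial.C (MvPolynomial.X k ^ Fintype.card F) :
        Polynomial (MvPolynomial (Fin N) F)))
      (MvPolynomial.X k * MvPolynomial.X l ^ (Fintype.card F ^ s) : MvPolynomial (Fin N) F)
    = Polynomial.monomial 0 (MvPolynomial.X k * MvPolynomial.X l ^ Fintype.card F ^ s)
    + Polynomial.monomial 1
        (MvPolynomial.X k ^ Fintype.card F * MvPolynomial.X l ^ Fintype.card F ^ s)
    + Polynomial.monomial (Fintype.card F ^ s)
        (MvPolynomial.X k * MvPolynomial.X l ^ (Fintype.card F ^ s * Fintype.card F))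
    + Polynomial.monomial (Fintype.card F ^ s + 1)
        (MvPolynomial.X k ^ Fintype.card F *
          MvPolynomial.X l ^ (Fintype.card F ^ s * Fintype.card F)) := by
  set q := Fintype.card F
  rw [map_mul, map_pow, aeval_X, aeval_X, hq]
  have h1 : (Polynomial.C (MvPolynomial.X l) : Polynomial (MvPolynomial (Fin N) F)) ^ q ^ s
      = Polynomial.C (MvPolynomial.X l ^ q ^ s) := by rw [← Polynomial.C_pow]
  have h2 : (Polynomial.X * Polynomial.C (MvPolynomial.X l ^ q) :
      Polynomial (MvPolynomial (Fin N) F)) ^ q ^ s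
      = Polynomial.X ^ q ^ s * Polynomial.C (MvPolynomial.X l ^ (q ^ s * q)) := by
    rw [mul_pow, ← Polynomial.C_pow, ← pow_mul, mul_comm q]
  rw [h1, h2]
  simp only [← Polynomial.C_mul_X_pow_eq_monomial, Polynomial.C_mul]
  ring

theorem stmt_13 (F : Type*) [Field F] [Fintype F] (m : ℕ) (j : F) (hj : j = 1 ∨ j = -1) :
    (∀ s : ℕ, 1 ≤ s →
        steenrod F (2 * m) (Fintype.card F ^ s + 1) (Omega F m s j)
          = (Omega F m s j) ^ Fintype.card F)
    ∧ (∀ s : ℕ, 2 ≤ s →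
        steenrod F (2 * m) 1 (Omega F m s j)
          = (Omega F m (s - 1) j) ^ Fintype.card F)
    ∧ steenrod F (2 * m) 1 (Omega F m 1 1) = 2 * (Omega0 F m) ^ Fintype.card F := by
  classical
  obtain ⟨p, hpI⟩ := CharP.exists F
  haveI := hpI
  obtain ⟨nn, hp, hcard⟩ := FiniteField.card F p
  haveI : Fact p.Prime := ⟨hp⟩
  haveI : CharP (MvPolynomial (Fin (2 * m)) F) p := inferInstance
  haveI : CharP (Polynomial (MvPolynomial (Fin (2 * m)) F)) p :=
    charP_of_injective_ringHom Polynomial.C_injective p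
  have hq2 : 2 ≤ Fintype.card F := Fintype.one_lt_card
  set q := Fintype.card F with hqdef
  have hq : ∀ e : ℕ, ∀ x y : Polynomial (MvPolynomial (Fin (2 * m)) F),
      (x + y) ^ q ^ e = x ^ q ^ e + y ^ q ^ e := by
    intro e x y
    rw [hcard, ← pow_mul]
    exact add_pow_char_pow x y p (nn * e)
  have hqM : ∀ x y : MvPolynomial (Fin (2 * m)) F, (x + y) ^ q = x ^ q + y ^ q := by
    intro x y
    rw [hcard]
    exact add_pow_char_pow x y p nn
  have hqsum : ∀ f : Fin m → MvPolynomial (Fin (2 * m)) F,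
      (∑ i : Fin m, f i) ^ q = ∑ i : Fin m, f i ^ q := by
    intro f
    rw [hcard]
    exact sum_pow_char_pow p nn Finset.univ f
  have hjq : ∀ jj : F, jj ^ q = jj := fun jj => FiniteField.pow_card jj
  -- expansion of the total Steenrod map applied to Omega
  have expand : ∀ (sz : ℕ) (jj : F),
      (MvPolynomial.aeval fun k : Fin (2 * m) =>
        (Polynomial.C (MvPolynomial.X k) +
          Polynomial.X * Polynomial.C (MvPolynomial.X k ^ q) :
          Polynomial (MvPolynomial (Fin (2 * m)) F))) (Omega F m sz jj)
      = ∑ i : Fin m,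
        (Polynomial.monomial 0
          (MvPolynomial.X (⟨2 * m - 1 - i, by have := i.isLt; omega⟩ : Fin (2 * m)) ^ q ^ sz *
            MvPolynomial.X (⟨i, by have := i.isLt; omega⟩ : Fin (2 * m)) +
           jj • (MvPolynomial.X (⟨2 * m - 1 - i, by have := i.isLt; omega⟩ : Fin (2 * m)) *
            MvPolynomial.X (⟨i, by have := i.isLt; omega⟩ : Fin (2 * m)) ^ q ^ sz))
        + Polynomial.monomial 1
          (MvPolynomial.X (⟨2 * m - 1 - i, by have := i.isLt; omega⟩ : Fin (2 * m)) ^ q ^ sz *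
            MvPolynomial.X (⟨i, by have := i.isLt; omega⟩ : Fin (2 * m)) ^ q +
           jj • (MvPolynomial.X (⟨2 * m - 1 - i, by have := i.isLt; omega⟩ : Fin (2 * m)) ^ q *
            MvPolynomial.X (⟨i, by have := i.isLt; omega⟩ : Fin (2 * m)) ^ q ^ sz))
        + Polynomial.monomial (q ^ sz)
          (MvPolynomial.X (⟨2 * m - 1 - i, by have := i.isLt; omega⟩ : Fin (2 * m)) ^
              (q ^ sz * q) *
            MvPolynomial.X (⟨i, by have := i.isLt; omega⟩ : Fin (2 * m)) +
           jj • (MvPolynomial.X (⟨2 * m - 1 - i, by have := i.isLt; omega⟩ : Fin (2 * m)) *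
            MvPolynomial.X (⟨i, by have := i.isLt; omega⟩ : Fin (2 * m)) ^ (q ^ sz * q)))
        + Polynomial.monomial (q ^ sz + 1)
          (MvPolynomial.X (⟨2 * m - 1 - i, by have := i.isLt; omega⟩ : Fin (2 * m)) ^
              (q ^ sz * q) *
            MvPolynomial.X (⟨i, by have := i.isLt; omega⟩ : Fin (2 * m)) ^ q +
           jj • (MvPolynomial.X (⟨2 * m - 1 - i, by have := i.isLt; omega⟩ : Fin (2 * m)) ^ q *
            MvPolynomial.X (⟨i, by have := i.isLt; omega⟩ : Fin (2 * m)) ^ (q ^ sz * q)))) := by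
    intro sz jj
    rw [Omega, map_sum]
    refine Finset.sum_congr rfl fun i _ => ?_
    rw [map_add, map_smul, steenrod_aux1 F (2 * m) hq _ _ sz, steenrod_aux2 F (2 * m) hq _ _ sz]
    simp only [smul_add, Polynomial.smul_monomial, map_add]
    abel
  have h2qs : ∀ s : ℕ, 1 ≤ s → 2 ≤ q ^ s := by
    intro s hs
    calc 2 ≤ q := hq2
    _ ≤ q ^ s := Nat.le_self_pow (by omega) q
  refine ⟨?_, ?_, ?_⟩
  · intro s hs
    have hqs := h2qs s hs
    unfold steenrod
    rw [expand s j, Polynomial.finset_sum_coeff]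
    rw [Omega, hqsum]
    simp only [← hqdef]
    refine Finset.sum_congr rfl fun i _ => ?_
    simp only [Polynomial.coeff_add, Polynomial.coeff_monomial,
      if_neg (by omega : (0 : ℕ) ≠ q ^ s + 1), if_neg (by omega : (1 : ℕ) ≠ q ^ s + 1),
      if_neg (by omega : q ^ s ≠ q ^ s + 1), if_pos rfl, if_true, zero_add]
    rw [hqM, smul_pow, hjq, mul_pow, mul_pow, ← pow_mul, ← pow_mul]
  · intro s hs
    have hqs := h2qs s (by omega)
    unfold steenrod
    rw [expand s j, Polynomial.finset_sum_coeff]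
    rw [Omega, hqsum]
    simp only [← hqdef]
    refine Finset.sum_congr rfl fun i _ => ?_
    simp only [Polynomial.coeff_add, Polynomial.coeff_monomial,
      if_neg (by omega : (0 : ℕ) ≠ 1), if_neg (by omega : q ^ s ≠ 1),
      if_neg (by omega : q ^ s + 1 ≠ 1), if_pos rfl, if_true, zero_add, add_zero]
    rw [hqM, smul_pow, hjq, mul_pow, mul_pow, ← pow_mul, ← pow_mul]
    have hss : q ^ (s - 1) * q = q ^ s := by
      rw [← pow_succ]
      congr 1
      omega
    rw [hss]
  · have hqs := h2qs 1 le_rfl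
    unfold steenrod
    have e3 := expand 1 (1 : F)
    rw [e3]
    rw [Polynomial.finset_sum_coeff]
    rw [Omega0, hqsum]
    simp only [Finset.mul_sum]
    refine Finset.sum_congr rfl fun i _ => ?_
    simp only [Polynomial.coeff_add, Polynomial.coeff_monomial,
      if_neg (by omega : (0 : ℕ) ≠ 1), if_neg (by omega : q ^ 1 ≠ 1),
      if_neg (by omega : q ^ 1 + 1 ≠ 1), if_pos rfl, if_true, zero_add, add_zero, one_smul]
    rw [mul_pow, pow_one]
    exact (two_mul _).symm
end

section
/- Let P• be the F_q-algebra endomorphism of F_q[x_1,...,x_{2m}] with P•(x_i) = x_i - x_i^q. For s ≥ 2 and j ∈ {-1,1}, with Ω_{s,j} = Σ_{i=1}^m (x_{2m-i+1}^{q^s} x_i + j x_{2m-i+1} x_i^{q^s}), one has P•(Ω_{s,j}) = Ω_{s,j}^q - Ω_{s+1,j} - Ω_{s-1,j}^q + Ω_{s,j}. -/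
open MvPolynomial Finset

/-! The Frobenius `φ = (·)^q` is a ring endomorphism fixing the constants `F_q`, and `P•` is
`x ↦ x - φ x` on the variables, so `P•` commutes with `φ`. Writing
`Ω_{s,j} = Σ (φ^s a · b + j · a · φ^s b)` over the pairs `(a, b) = (x_{2m-i+1}, x_i)`, the identity
becomes the expansion of `φ^s (a - φ a) · (b - φ b) + j (a - φ a) · φ^s (b - φ b)`, which holds
for an arbitrary ring endomorphism `φ` fixing `j` and any `s ≥ 1`. -/

section OmegaTerm

variable {R : Type*} [CommRing R]

def omegaTerm (φ : R →+* R) (s : ℕ) (j a b : R) : R :=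
  (φ ^ s) a * b + j * (a * (φ ^ s) b)

theorem omegaTerm_sub_self (φ : R →+* R) {j : R} (hj : φ j = j) (t : ℕ) (a b : R) :
    omegaTerm φ (t + 1) j (a - φ a) (b - φ b)
      = φ (omegaTerm φ (t + 1) j a b) - omegaTerm φ (t + 2) j a b
        - φ (omegaTerm φ t j a b) + omegaTerm φ (t + 1) j a b := by
  have hφ : ∀ k x, (φ ^ (k + 1)) x = φ ((φ ^ k) x) := fun k x => by
    rw [pow_succ']; rfl
  have hφ' : ∀ k x, (φ ^ k) (φ x) = (φ ^ (k + 1)) x := fun k x => by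
    rw [pow_succ]; rfl
  simp only [omegaTerm, map_sub, map_add, map_mul, hj, hφ', hφ]
  ring

theorem map_omegaTerm {φ ψ : R →+* R} (h : Commute ψ φ) (s : ℕ) (j a b : R) :
    ψ (omegaTerm φ s j a b) = omegaTerm φ s (ψ j) (ψ a) (ψ b) := by
  have hs : ∀ x, ψ ((φ ^ s) x) = (φ ^ s) (ψ x) := fun x =>
    congrArg (· x) (h.pow_right s).eq
  simp only [omegaTerm, map_add, map_mul, hs]

end OmegaTerm

theorem RingHom.pow_apply_of_forall_eq_pow {R : Type*} [Semiring R] {φ : R →+* R} {q : ℕ}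
    (hφ : ∀ x, φ x = x ^ q) (s : ℕ) (x : R) : (φ ^ s) x = x ^ q ^ s := by
  induction s with
  | zero => simp
  | succ s ih => rw [pow_succ', RingHom.coe_mul, Function.comp_apply, ih, hφ, ← pow_mul, pow_succ]

theorem MvPolynomial.exists_ringHom_eq_pow_card (σ F : Type*) [Field F] [Fintype F] :
    ∃ φ : MvPolynomial σ F →+* MvPolynomial σ F, ∀ x, φ x = x ^ Fintype.card F := by
  obtain ⟨n, hp, hcard⟩ := FiniteField.card F (ringChar F)
  have : Fact (ringChar F).Prime := ⟨hp⟩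
  exact ⟨iterateFrobenius _ (ringChar F) n, fun x => by rw [hcard, iterateFrobenius_def]⟩

theorem Omega_eq_sum_omegaTerm (F : Type*) [Field F] [Fintype F] (m s : ℕ) (j : F)
    {φ : MvPolynomial (Fin (2 * m)) F →+* MvPolynomial (Fin (2 * m)) F}
    (hφ : ∀ x, φ x = x ^ Fintype.card F) :
    Omega F m s j = ∑ i : Fin m, omegaTerm φ s (C j)
      (X (⟨2 * m - 1 - i, by have := i.isLt; omega⟩ : Fin (2 * m)))
      (X (⟨i, by have := i.isLt; omega⟩ : Fin (2 * m))) := by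
  simp only [Omega, omegaTerm, RingHom.pow_apply_of_forall_eq_pow hφ, smul_eq_C_mul]

theorem stmt_15_general (F : Type*) [Field F] [Fintype F] (m : ℕ) (j : F)
    (s : ℕ) (hs : 2 ≤ s) :
    MvPolynomial.aeval (R := F)
        (fun i : Fin (2 * m) => MvPolynomial.X i - MvPolynomial.X i ^ Fintype.card F)
        (Omega F m s j)
      = (Omega F m s j) ^ Fintype.card F - Omega F m (s + 1) j
        - (Omega F m (s - 1) j) ^ Fintype.card F + Omega F m s j := by
  obtain ⟨φ, hφ⟩ := exists_ringHom_eq_pow_card (Fin (2 * m)) F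
  set ψ : MvPolynomial (Fin (2 * m)) F →+* MvPolynomial (Fin (2 * m)) F :=
    (aeval fun i => X i - X i ^ Fintype.card F).toRingHom
  have hψφ : Commute ψ φ := RingHom.ext fun x => by
    simp only [RingHom.coe_mul, Function.comp_apply, hφ, map_pow]
  have hψX : ∀ i : Fin (2 * m), ψ (X i) = X i - φ (X i) := fun i => by simp [ψ, hφ]
  have hφj : φ (C j) = C j := by rw [hφ, ← map_pow, FiniteField.pow_card]
  obtain ⟨t, rfl⟩ : ∃ t, s = t + 1 := ⟨s - 1, by omega⟩
  calc ψ (Omega F m (t + 1) j) = φ (Omega F m (t + 1) j) - Omega F m (t + 2) j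
        - φ (Omega F m t j) + Omega F m (t + 1) j := by
        simp only [Omega_eq_sum_omegaTerm F m _ j hφ, map_sum, map_omegaTerm hψφ, hψX,
          show ψ (C j) = C j by simp [ψ], omegaTerm_sub_self φ hφj, sum_add_distrib,
          sum_sub_distrib]
    _ = _ := by simp only [hφ]; rfl

theorem stmt_15 (F : Type*) [Field F] [Fintype F] (m : ℕ) (j : F) (hj : j = 1 ∨ j = -1)
    (s : ℕ) (hs : 2 ≤ s) :
    MvPolynomial.aeval (R := F)
        (fun i : Fin (2 * m) => MvPolynomial.X i - MvPolynomial.X i ^ Fintype.card F)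
        (Omega F m s j)
      = (Omega F m s j) ^ Fintype.card F - Omega F m (s + 1) j
        - (Omega F m (s - 1) j) ^ Fintype.card F + Omega F m s j :=
  stmt_15_general F m j s hs
end
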